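/- arXiv:2211.04409 — 2 statements merged into one kernel-verified Lean document; each statement's English description precedes it below -/
import Mathlib

section
/- Total gain identity (Proposition 3): For a tree m with node values p_m(t) = −α·(Σ_{x_i∈R_t} G_i)/(|R_t|+λ) and PreDecomp attributions f_{m,k}(x) = Σ_{inner t: v(t)=k}[p_m(left(t))·1[x∈R_{left(t)}] + p_m(right(t))·1[x∈R_{right(t)}] − p_m(t)·1[x∈R_t]], the total gain for feature k, TotalGain_{m,k} = Σ_{inner t: v(t)=k} Δ(t), equals −α^{−1}·Σ_{i=1}^N f_{m,k}(x_i)·G_i, where Δ(t) = (Σ_{x_i∈R_{left(t)}} G_i)²/(|R_{left(t)}|+λ) + (Σ_{x_i∈R_{right(t)}} G_i)²/(|R_{right(t)}|+λ) − (Σ_{x_i∈R_t} G_i)²/(|R_t|+λ). -/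
open MeasureTheory Set Finset Filter

/-- A finite full binary tree: every node carries a region `R ⊆ β` and a value `w : ℝ`;
inner nodes additionally carry a split feature `v : ℕ`. -/
inductive BT (β : Type) where
  | leaf (R : Set β) (w : ℝ)
  | node (R : Set β) (w : ℝ) (v : ℕ) (l r : BT β)

namespace BT

variable {β ι : Type}

/-- The region associated with the root node of a (sub)tree. -/
def region : BT β → Set β
  | leaf R _ => R
  | node R _ _ _ _ => R

/-- The value assigned to the root node of a (sub)tree. -/
def val : BT β → ℝ
  | leaf _ w => w
  | node _ w _ _ _ => w

/-- Well-formedness: the children's regions partition the parent's region. -/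
def WF : BT β → Prop
  | leaf _ _ => True
  | node R _ _ l r => l.region ∪ r.region = R ∧ Disjoint l.region r.region ∧ l.WF ∧ r.WF

/-- Tree prediction: `f(X) = Σ_{leaves ℓ} p(ℓ) · 1[X ∈ R_ℓ]`. -/
noncomputable def pred : BT β → β → ℝ
  | leaf R w, X => R.indicator (fun _ => w) X
  | node _ _ _ l r, X => l.pred X + r.pred X

/-- Total attribution: sum over all inner nodes `t` of
`p(left t)·1[X∈R_left] + p(right t)·1[X∈R_right] − p(t)·1[X∈R_t]`. -/
noncomputable def attr : BT β → β → ℝ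
  | leaf _ _, _ => 0
  | node R w _ l r, X =>
      (l.region.indicator (fun _ => l.val) X + r.region.indicator (fun _ => r.val) X
        - R.indicator (fun _ => w) X) + l.attr X + r.attr X

/-- PreDecomp: per-feature attribution, summing only over inner nodes splitting on feature `k`. -/
noncomputable def attrF (k : ℕ) : BT β → β → ℝ
  | leaf _ _, _ => 0
  | node R w v l r, X =>
      (if v = k then
        l.region.indicator (fun _ => l.val) X + r.region.indicator (fun _ => r.val) X
          - R.indicator (fun _ => w) X
       else 0) + l.attrF k X + r.attrF k X

/-- All split features of inner nodes belong to `s`. -/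
def FeatsIn (s : Finset ℕ) : BT β → Prop
  | leaf _ _ => True
  | node _ _ v l r => v ∈ s ∧ l.FeatsIn s ∧ r.FeatsIn s

/-- Every node's value equals `pv` of its region. -/
def ValsEq (pv : Set β → ℝ) : BT β → Prop
  | leaf R w => w = pv R
  | node R w _ l r => w = pv R ∧ l.ValsEq pv ∧ r.ValsEq pv

/-- A predicate holds for every node's region. -/
def AllRegions (P : Set β → Prop) : BT β → Prop
  | leaf R _ => P R
  | node R _ _ l r => P R ∧ l.AllRegions P ∧ r.AllRegions P

/-- A predicate holds at every subtree (i.e. every node). -/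
def AllSub (P : BT β → Prop) : BT β → Prop
  | leaf R w => P (leaf R w)
  | node R w v l r => P (node R w v l r) ∧ l.AllSub P ∧ r.AllSub P

end BT

/-- `Σ_{x_i ∈ R ∩ D} G_i`. -/
noncomputable def gsum {β ι : Type} (D : Finset ι) (x : ι → β) (G : ι → ℝ) (R : Set β) : ℝ :=
  ∑ i ∈ D, R.indicator (fun _ => G i) (x i)

/-- `|R ∩ D|` as a real number. -/
noncomputable def cnt {β ι : Type} (D : Finset ι) (x : ι → β) (R : Set β) : ℝ :=
  ∑ i ∈ D, R.indicator (fun _ => (1 : ℝ)) (x i)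

namespace BT

/-- Total gain of feature `k` in a tree: sum of split gains over inner nodes splitting on `k`. -/
noncomputable def totalGain {β ι : Type} (D : Finset ι) (x : ι → β) (G : ι → ℝ)
    (lam : ℝ) (k : ℕ) : BT β → ℝ
  | leaf _ _ => 0
  | node R _ v l r =>
      (if v = k then
        (gsum D x G l.region) ^ 2 / (cnt D x l.region + lam)
        + (gsum D x G r.region) ^ 2 / (cnt D x r.region + lam)
        - (gsum D x G R) ^ 2 / (cnt D x R + lam)
       else 0)
      + totalGain D x G lam k l + totalGain D x G lam k r

end BT

/-!
Both sides are sums over the split nodes on feature `k`, so it suffices to match them node by node.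
Pairing the attribution of a split `t` with `G` gives `p(l)·S_l + p(r)·S_r − p(t)·S_t`, where
`S_s = Σ_{x_i ∈ R_s} G_i`, and the choice `p(s) = −α·S_s/(|R_s|+λ)` turns each `p(s)·S_s` into
`−α·S_s²/(|R_s|+λ)`, i.e. `−α` times the corresponding term of the split gain.
-/

namespace BT

variable {β ι : Type}

theorem ValsEq.val_eq {pv : Set β → ℝ} : ∀ {t : BT β}, t.ValsEq pv → t.val = pv t.region
  | leaf _ _, h => h
  | node _ _ _ _ _, h => h.1

end BT

lemma sum_indicator_mul_eq_mul_gsum {β ι : Type} (D : Finset ι) (x : ι → β) (G : ι → ℝ)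
    (R : Set β) (w : ℝ) :
    ∑ i ∈ D, R.indicator (fun _ => w) (x i) * G i = w * gsum D x G R := by
  rw [gsum, Finset.mul_sum]
  refine Finset.sum_congr rfl fun i _ => ?_
  by_cases h : x i ∈ R <;> simp [h]

lemma neg_inv_mul_neg_mul_div_mul {α : ℝ} (hα : α ≠ 0) (g c : ℝ) :
    -α⁻¹ * (-α * g / c * g) = g ^ 2 / c := by
  field_simp

theorem stmt_3_general {β ι : Type} (D : Finset ι) (x : ι → β) (G : ι → ℝ)
    (α lam : ℝ) (hα : 0 < α)
    (t : BT β)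
    (hvals : t.ValsEq (fun R => -α * gsum D x G R / (cnt D x R + lam)))
    (k : ℕ) :
    t.totalGain D x G lam k = -α⁻¹ * ∑ i ∈ D, t.attrF k (x i) * G i := by
  induction t with
  | leaf => simp [BT.totalGain, BT.attrF]
  | node R w v l r ihl ihr =>
    obtain ⟨hw, hl, hr⟩ := hvals
    simp only [BT.totalGain, BT.attrF, add_mul, Finset.sum_add_distrib, mul_add, ← ihl hl,
      ← ihr hr]
    congr 2
    split_ifs
    · simp only [sub_mul, add_mul, Finset.sum_sub_distrib, Finset.sum_add_distrib,
        sum_indicator_mul_eq_mul_gsum, hl.val_eq, hr.val_eq, hw, mul_sub, mul_add,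
        neg_inv_mul_neg_mul_div_mul hα.ne']
    · simp

/-- Total gain identity: with PreDecomp node values
`p_m(t) = −α·(Σ_{x_i∈R_t} G_i)/(|R_t|+λ)`,
`TotalGain_{m,k} = −α⁻¹·Σ_{i=1}^N f_{m,k}(x_i)·G_i`. -/
theorem stmt_3 {β ι : Type} (D : Finset ι) (x : ι → β) (G : ι → ℝ)
    (α lam : ℝ) (hα : 0 < α) (hlam : 0 ≤ lam)
    (t : BT β) (hWF : t.WF)
    (hpos : t.AllRegions (fun R => 0 < cnt D x R + lam))
    (hvals : t.ValsEq (fun R => -α * gsum D x G R / (cnt D x R + lam)))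
    (k : ℕ) :
    t.totalGain D x G lam k = -α⁻¹ * ∑ i ∈ D, t.attrF k (x i) * G i :=
  stmt_3_general D x G α lam hα t hvals k
end

section
/- Nonnegativity of total gain at λ = 0 and consequent sign of the TreeInner score on training data: with λ = 0, every split gain Δ(t) = A_L²/n_L + A_R²/n_R − (A_L+A_R)²/(n_L+n_R) ≥ 0, hence TotalGain_{m,k} = Σ_{inner t: v(t)=k} Δ(t) ≥ 0, and therefore −Σ_{i=1}^N f_{m,k}(x_i)·G_i = α·TotalGain_{m,k} ≥ 0, i.e., the in-sample inner product between PreDecomp and the negative gradient is nonnegative for every feature. -/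
open MeasureTheory Set Finset Filter

/-! With `λ = 0` every node value is `p = -α A / n` (`A` the gradient sum, `n` the count of its
region), so pairing a node's indicator term with the gradients gives `p · A = -α A² / n`. Each
split's term of PreDecomp therefore contributes exactly `α` times its gain to
`-Σ f_{m,k}(x_i) G_i`, and each gain is nonnegative because it equals
`(A_L n_R - A_R n_L)² / (n_L n_R (n_L + n_R))`. -/

theorem split_gain_nonneg (AL AR nL nR : ℝ) (hL : 0 < nL) (hR : 0 < nR) :
    0 ≤ AL ^ 2 / nL + AR ^ 2 / nR - (AL + AR) ^ 2 / (nL + nR) := by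
  have h : AL ^ 2 / nL + AR ^ 2 / nR - (AL + AR) ^ 2 / (nL + nR)
      = (AL * nR - AR * nL) ^ 2 / (nL * nR * (nL + nR)) := by
    field_simp
    ring
  rw [h]
  positivity

section Sums

variable {β ι : Type} (D : Finset ι) (x : ι → β)

theorem gsum_union (G : ι → ℝ) {l r : Set β} (hd : Disjoint l r) :
    gsum D x G (l ∪ r) = gsum D x G l + gsum D x G r := by
  simp only [gsum, Set.indicator_union_of_disjoint hd, Finset.sum_add_distrib]

theorem cnt_union {l r : Set β} (hd : Disjoint l r) :
    cnt D x (l ∪ r) = cnt D x l + cnt D x r := by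
  simp only [cnt, Set.indicator_union_of_disjoint hd, Finset.sum_add_distrib]

theorem sum_indicator_const_mul (G : ι → ℝ) (R : Set β) (w : ℝ) :
    ∑ i ∈ D, R.indicator (fun _ => w) (x i) * G i = w * gsum D x G R := by
  rw [gsum, Finset.mul_sum]
  refine Finset.sum_congr rfl fun i _ => ?_
  by_cases h : x i ∈ R <;> simp [h]

end Sums

namespace BT

variable {β ι : Type}

theorem AllRegions.root {P : Set β → Prop} : ∀ {t : BT β}, t.AllRegions P → P t.region
  | leaf _ _, h => h
  | node _ _ _ _ _, h => h.1

variable (D : Finset ι) (x : ι → β) (G : ι → ℝ) (k : ℕ)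

theorem sum_split_term_mul (l r : BT β) (R : Set β) (w : ℝ) :
    ∑ i ∈ D, (l.region.indicator (fun _ => l.val) (x i)
        + r.region.indicator (fun _ => r.val) (x i) - R.indicator (fun _ => w) (x i)) * G i
      = l.val * gsum D x G l.region + r.val * gsum D x G r.region - w * gsum D x G R := by
  simp only [add_mul, sub_mul, Finset.sum_add_distrib, Finset.sum_sub_distrib,
    sum_indicator_const_mul]

theorem neg_sum_attrF_mul_eq_mul_totalGain (α : ℝ) {t : BT β}
    (hvals : t.ValsEq (fun R => -α * gsum D x G R / cnt D x R)) :
    -(∑ i ∈ D, t.attrF k (x i) * G i) = α * t.totalGain D x G 0 k := by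
  induction t with
  | leaf => simp [attrF, totalGain]
  | node R w v l r ihl ihr =>
    obtain ⟨hw, hvl, hvr⟩ := hvals
    have hsplit : ∑ i ∈ D, (node R w v l r).attrF k (x i) * G i
        = (if v = k then l.val * gsum D x G l.region + r.val * gsum D x G r.region
            - w * gsum D x G R else 0)
          + ∑ i ∈ D, l.attrF k (x i) * G i + ∑ i ∈ D, r.attrF k (x i) * G i := by
      simp only [attrF, add_mul, Finset.sum_add_distrib, ite_mul, zero_mul,
        ← sum_split_term_mul]
      split_ifs <;> simp
    rw [hsplit, totalGain, mul_add, mul_add, ← ihl hvl, ← ihr hvr, hvl.val_eq, hvr.val_eq, hw]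
    split_ifs <;> ring

theorem totalGain_nonneg {t : BT β} (hWF : t.WF)
    (hpos : t.AllRegions (fun R => 0 < cnt D x R)) :
    0 ≤ t.totalGain D x G 0 k := by
  induction t with
  | leaf => exact le_rfl
  | node R w v l r ihl ihr =>
    obtain ⟨rfl, hd, hWFl, hWFr⟩ := hWF
    obtain ⟨-, hposl, hposr⟩ := hpos
    have hgain := split_gain_nonneg (gsum D x G l.region) (gsum D x G r.region)
      (cnt D x l.region) (cnt D x r.region) hposl.root hposr.root
    rw [← gsum_union D x G hd, ← cnt_union D x hd] at hgain
    rw [totalGain]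
    refine add_nonneg (add_nonneg ?_ (ihl hWFl hposl)) (ihr hWFr hposr)
    split_ifs
    · simpa only [add_zero] using hgain
    · exact le_rfl

end BT

/-- with `λ = 0`, every split gain is nonnegative, hence the total gain of
each feature is nonnegative, and the in-sample inner product between PreDecomp and the
negative gradient, which equals `α · TotalGain_{m,k}`, is nonnegative. -/
theorem stmt_14 {β ι : Type} (D : Finset ι) (x : ι → β) (G : ι → ℝ)
    (α : ℝ) (hα : 0 < α) (t : BT β) (hWF : t.WF)
    (hpos : t.AllRegions (fun R => 0 < cnt D x R))
    (hvals : t.ValsEq (fun R => -α * gsum D x G R / cnt D x R)) (k : ℕ) :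
    (∀ AL AR nL nR : ℝ, 0 < nL → 0 < nR →
        0 ≤ AL ^ 2 / nL + AR ^ 2 / nR - (AL + AR) ^ 2 / (nL + nR)) ∧
    0 ≤ t.totalGain D x G 0 k ∧
    -(∑ i ∈ D, t.attrF k (x i) * G i) = α * t.totalGain D x G 0 k ∧
    0 ≤ -(∑ i ∈ D, t.attrF k (x i) * G i) := by
  have hgain := BT.totalGain_nonneg D x G k hWF hpos
  have hinner := BT.neg_sum_attrF_mul_eq_mul_totalGain D x G k α hvals
  exact ⟨split_gain_nonneg, hgain, hinner, hinner ▸ mul_nonneg hα.le hgain⟩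
end
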